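/- Representation collapse is suboptimal: if there exists a configuration of nonzero representations achieving discriminative contrastive loss L_dcl < K log K, then the collapsed configuration (all representations equal to a common constant, giving total loss K log K) does not minimize the combined loss L_cncl + L_dcl, since rescaling the low-L_dcl configuration to have norms at most ε/(2K) (with ε = K log K − L_dcl) yields total loss strictly below K log K. -/
import Mathlib


open scoped RealInnerProductSpace

/-- Cosine similarity of two vectors in `ℝ^d`. -/
noncomputable def cosSim {d : ℕ} (u v : EuclideanSpace ℝ (Fin d)) : ℝ :=
  ⟪u, v⟫ / (‖u‖ * ‖v‖)

/-- Scoring function `h(u,v) = exp(sim(u,v)/τ)`. -/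
noncomputable def hScore {d : ℕ} (τ : ℝ) (u v : EuclideanSpace ℝ (Fin d)) : ℝ :=
  Real.exp (cosSim u v / τ)

/-- The discriminative contrastive loss for a single sample, with anchor `x0`
and `K` transformed representations indexed by `Fin K`. -/
noncomputable def Ldcl {d K : ℕ} (τ : ℝ) (x0 : EuclideanSpace ℝ (Fin d))
    (x : Fin K → EuclideanSpace ℝ (Fin d)) : ℝ :=
  -∑ k, Real.log (hScore τ (x k) x0 /
      (hScore τ (x k) x0 + ∑ l ∈ Finset.univ.erase k, hScore τ (x k) (x l)))

lemma cosSim_smul_smul {d : ℕ} (s : ℝ) (hs : 0 < s) (u v : EuclideanSpace ℝ (Fin d)) :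
    cosSim (s • u) (s • v) = cosSim u v := by
  unfold cosSim
  rw [real_inner_smul_left, real_inner_smul_right, norm_smul, norm_smul,
    Real.norm_eq_abs, abs_of_pos hs]
  rw [show s * ‖u‖ * (s * ‖v‖) = s * (s * (‖u‖ * ‖v‖)) by ring,
    show s * (s * ⟪u, v⟫) = s * (s * ⟪u, v⟫) from rfl]
  rw [mul_div_mul_left _ _ hs.ne', mul_div_mul_left _ _ hs.ne']

lemma cosSim_smul_left {d : ℕ} (s : ℝ) (hs : 0 < s) (u v : EuclideanSpace ℝ (Fin d)) :
    cosSim (s • u) v = cosSim u v := by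
  unfold cosSim
  rw [real_inner_smul_left, norm_smul, Real.norm_eq_abs, abs_of_pos hs, mul_assoc,
    mul_div_mul_left _ _ hs.ne']

lemma cosSim_smul_right {d : ℕ} (s : ℝ) (hs : 0 < s) (u v : EuclideanSpace ℝ (Fin d)) :
    cosSim u (s • v) = cosSim u v := by
  unfold cosSim
  rw [real_inner_smul_right, norm_smul, Real.norm_eq_abs, abs_of_pos hs,
    show ‖u‖ * (s * ‖v‖) = s * (‖u‖ * ‖v‖) by ring, mul_div_mul_left _ _ hs.ne']

lemma Ldcl_smul {d K : ℕ} (τ : ℝ) (s : ℝ) (hs : 0 < s) (x0 : EuclideanSpace ℝ (Fin d))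
    (x : Fin K → EuclideanSpace ℝ (Fin d)) :
    Ldcl τ x0 (fun k => s • x k) = Ldcl τ x0 x := by
  unfold Ldcl hScore
  simp only [cosSim_smul_left s hs, cosSim_smul_smul s hs, cosSim_smul_right s hs]

/-- Representation collapse is suboptimal: the collapsed configuration (all
representations equal to a common nonzero constant) has combined loss
`L_cncl + L_dcl = K log K`, and if some configuration of nonzero representations
achieves `L_dcl < K log K`, then there exists a configuration of nonzero
representations whose combined loss is strictly below `K log K`; hence the
collapsed configuration does not minimize the combined loss. -/
theorem collapse_not_optimal {d K : ℕ} (hK : 1 ≤ K) (τ : ℝ) (hτ : 0 < τ)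
    (O : EuclideanSpace ℝ (Fin d)) (Ok : Fin K → EuclideanSpace ℝ (Fin d))
    (hO : O ≠ 0) (hOk : ∀ k, Ok k ≠ 0)
    (hL : Ldcl τ O Ok < K * Real.log K) :
    (∀ c : EuclideanSpace ℝ (Fin d), c ≠ 0 →
        (∑ _k : Fin K, ‖c - c‖ ^ 2) + Ldcl τ c (fun _ : Fin K => c)
          = K * Real.log K) ∧
    ∃ (O' : EuclideanSpace ℝ (Fin d)) (Ok' : Fin K → EuclideanSpace ℝ (Fin d))
      (G' : EuclideanSpace ℝ (Fin d)), O' ≠ 0 ∧ (∀ k, Ok' k ≠ 0) ∧ G' ≠ 0 ∧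
      (∑ k : Fin K, ‖Ok' k - G'‖ ^ 2) + Ldcl τ O' Ok' < K * Real.log K := by
  have hKpos : (0 : ℝ) < (K : ℝ) := by exact_mod_cast hK
  constructor
  · intro c hc
    have hnorm : ‖c‖ ≠ 0 := norm_ne_zero_iff.mpr hc
    have hcos : cosSim c c = 1 := by
      unfold cosSim
      rw [real_inner_self_eq_norm_mul_norm]
      field_simp
    have hh : hScore τ c c = Real.exp (1 / τ) := by unfold hScore; rw [hcos]
    have hhpos : (0 : ℝ) < Real.exp (1 / τ) := Real.exp_pos _
    have hterm : ∀ k : Fin K,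
        Real.log (hScore τ c c /
          (hScore τ c c + ∑ l ∈ Finset.univ.erase k, hScore τ c c))
        = -Real.log K := by
      intro k
      rw [hh, Finset.sum_const, Finset.card_erase_of_mem (Finset.mem_univ k),
        Finset.card_univ, Fintype.card_fin, nsmul_eq_mul]
      have : Real.exp (1/τ) + (↑(K - 1)) * Real.exp (1/τ) = K * Real.exp (1/τ) := by
        have : ((K - 1 : ℕ) : ℝ) = (K : ℝ) - 1 := by
          rw [Nat.cast_sub hK]; simp
        rw [this]; ring
      rw [this]
      rw [show Real.exp (1/τ) / ((K : ℝ) * Real.exp (1/τ)) = 1 / K by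
        rw [mul_comm, ← div_div, div_self hhpos.ne']]
      rw [one_div, Real.log_inv]
    simp only [sub_self, norm_zero]
    rw [Ldcl]
    simp only [hterm]
    simp [Finset.sum_const, Finset.card_univ]
  · set ε := K * Real.log K - Ldcl τ O Ok with hε
    have hεpos : 0 < ε := by simp [hε]; linarith
    set C := ∑ k : Fin K, ‖Ok k - Ok ⟨0, hK⟩‖ ^ 2 with hC
    have hCnn : 0 ≤ C := Finset.sum_nonneg fun k _ => by positivity
    set s := Real.sqrt (ε / (C + 1)) with hs
    have hspos : 0 < s := Real.sqrt_pos.mpr (by positivity)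
    refine ⟨O, fun k => s • Ok k, s • Ok ⟨0, hK⟩, hO,
      fun k => smul_ne_zero hspos.ne' (hOk k), smul_ne_zero hspos.ne' (hOk ⟨0, hK⟩), ?_⟩
    rw [Ldcl_smul τ s hspos]
    have hsum : (∑ k : Fin K, ‖s • Ok k - s • Ok ⟨0, hK⟩‖ ^ 2) = s ^ 2 * C := by
      rw [hC, Finset.mul_sum]
      refine Finset.sum_congr rfl fun k _ => ?_
      rw [← smul_sub, norm_smul, Real.norm_eq_abs, abs_of_pos hspos, mul_pow]
    rw [hsum]
    have hs2 : s ^ 2 = ε / (C + 1) := Real.sq_sqrt (by positivity)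
    have hlt : s ^ 2 * C < ε := by
      rw [hs2, div_mul_eq_mul_div, div_lt_iff₀ (by positivity)]
      nlinarith
    linarith [hlt, hε.symm ▸ hεpos]
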